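/- arXiv:1705.07684 — 2 statements merged into one kernel-verified Lean document; each statement's English description precedes it below -/
import Mathlib

section
/- Let K > 0 and 0 < p ≤ 1, and define f : [0, ∞) → ℝ by f(t) = K t^{p+1}/(p+1) − t. Then f satisfies f(0) = 0, f'(0) = −1, f' is strictly increasing, and the function t ↦ [f(t)/f'(t) − t]/t^{p+1} is strictly increasing on (0, ν), where ν := sup{t ≥ 0 : f'(t) < 0} = (1/K)^{1/p}. Moreover, for constants 0 ≤ ϑ < 1, 0 ≤ ω₂ < ω₁ with ω₁ϑ + ω₂ < 1 and 0 ≤ λ < (1 − ω₂ − ω₁ϑ)/(ω₁(1+ϑ)), the quantity ρ := sup{δ ∈ (0, ν) : ω₁(1+ϑ)(1+λ)(f(t)/(t f'(t)) − 1) + ω₁[(1+ϑ)λ + ϑ] + ω₂ < 1 for all t ∈ (0, δ)} equals [((1 − ω₁[(1+ϑ)λ + ϑ] − ω₂)(p+1)) / (K(p − ω₁[(1+ϑ)λ + ϑ − p] − ω₂(p+1) + 1))]^{1/p}, and ρ < ν. -/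
/-!
With `u = K t^p`, every quantity in the statement is a function of `u` alone on `(0, ν)`, where
`0 < u < 1`: `f t / (t f' t) - 1 = p/(p+1) · u/(1-u)` and
`(f t / f' t - t) / t^(p+1) = pK/((p+1)(1-u))`.
Both increase with `u`, hence with `t`. So the condition defining `ρ` holds at `t` exactly when `u`
stays below a threshold `c < 1`, that is, when `t < (c/K)^(1/p)`, and `ρ` is this bound.
-/

open Set

noncomputable section

theorem mul_div_one_sub_lt_iff {a e u : ℝ} (ha : 0 < a) (he : 0 < e) (hu : u < 1) :
    a * (u / (1 - u)) < e ↔ u < e / (a + e) := by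
  rw [mul_div_assoc', div_lt_iff₀ (by linarith), lt_div_iff₀ (by linarith)]
  constructor <;> intro h <;> linarith

theorem sSup_setOf_forall_Ioo {P : ℝ → Prop} {a τ ν : ℝ} (haτ : a < τ) (hτν : τ < ν)
    (hP : ∀ t ∈ Ioo a ν, P t ↔ t < τ) :
    sSup {δ | δ ∈ Ioo a ν ∧ ∀ t ∈ Ioo a δ, P t} = τ := by
  suffices hset : {δ | δ ∈ Ioo a ν ∧ ∀ t ∈ Ioo a δ, P t} = Ioc a τ by
    rw [hset, csSup_Ioc haτ]
  ext δ
  constructor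
  · rintro ⟨⟨haδ, hδν⟩, hδ⟩
    refine ⟨haδ, le_of_not_gt fun hτδ => ?_⟩
    have hmid := (hP ((τ + δ) / 2) ⟨by linarith, by linarith⟩).1 (hδ _ ⟨by linarith, by linarith⟩)
    linarith
  · rintro ⟨haδ, hδτ⟩
    exact ⟨⟨haδ, by linarith⟩, fun t ⟨hat, htδ⟩ => (hP t ⟨hat, by linarith⟩).2 (by linarith)⟩

def majorant (K p t : ℝ) : ℝ := K * t ^ (p + 1) / (p + 1) - t

def majorantDeriv (K p t : ℝ) : ℝ := K * t ^ p - 1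

variable {K p : ℝ}

theorem hasDerivAt_majorant (hp : 0 < p) (t : ℝ) :
    HasDerivAt (majorant K p) (majorantDeriv K p t) t := by
  have hpow : HasDerivAt (fun x : ℝ => x ^ (p + 1)) ((p + 1) * t ^ p) t := by
    simpa using Real.hasDerivAt_rpow_const (x := t) (p := p + 1) (Or.inr (by linarith))
  refine (((hpow.const_mul K).div_const (p + 1)).sub (hasDerivAt_id' t)).congr_deriv ?_
  unfold majorantDeriv
  field_simp [show p + 1 ≠ 0 by linarith]

theorem majorant_zero (hp : 0 < p) : majorant K p 0 = 0 := by
  simp [majorant, Real.zero_rpow (show p + 1 ≠ 0 by linarith)]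

theorem majorantDeriv_zero (hp : 0 < p) : majorantDeriv K p 0 = -1 := by
  simp [majorantDeriv, Real.zero_rpow hp.ne']

theorem mul_rpow_lt_iff {t b : ℝ} (hK : 0 < K) (hp : 0 < p) (ht : 0 ≤ t) (hb : 0 ≤ b) :
    K * t ^ p < b ↔ t < (b / K) ^ (1 / p) := by
  rw [one_div, Real.lt_rpow_inv_iff_of_pos ht (by positivity) hp, lt_div_iff₀' hK]

theorem strictMonoOn_majorantDeriv (hK : 0 < K) (hp : 0 < p) :
    StrictMonoOn (majorantDeriv K p) (Ici 0) := fun x hx y _ hxy => by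
  have := Real.rpow_lt_rpow hx hxy hp
  simp only [majorantDeriv]
  gcongr

theorem sSup_setOf_majorantDeriv_neg (hK : 0 < K) (hp : 0 < p) :
    sSup {t | 0 ≤ t ∧ majorantDeriv K p t < 0} = (1 / K) ^ (1 / p) := by
  have hset : {t | 0 ≤ t ∧ majorantDeriv K p t < 0} = Ico 0 ((1 / K) ^ (1 / p)) := by
    ext t
    simp only [majorantDeriv, mem_ofPred_eq, mem_Ico, sub_neg]
    exact and_congr_right fun ht => mul_rpow_lt_iff hK hp ht zero_le_one
  rw [hset, csSup_Ico (by positivity)]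

theorem majorant_div_mul_majorantDeriv_sub_one {t : ℝ} (hp : 0 < p) (ht : 0 < t)
    (hu : K * t ^ p < 1) :
    majorant K p t / (t * majorantDeriv K p t) - 1 =
      p / (p + 1) * (K * t ^ p / (1 - K * t ^ p)) := by
  have hpow : t ^ (p + 1) = t ^ p * t := by rw [Real.rpow_add ht, Real.rpow_one]
  have hu' : K * t ^ p - 1 ≠ 0 := by linarith
  have hu'' : 1 - K * t ^ p ≠ 0 := by linarith
  rw [majorant, majorantDeriv, hpow]
  field_simp [ht.ne', show p + 1 ≠ 0 by linarith]
  ring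

theorem majorant_div_majorantDeriv_sub_div_rpow {t : ℝ} (hp : 0 < p) (ht : 0 < t)
    (hu : K * t ^ p < 1) :
    (majorant K p t / majorantDeriv K p t - t) / t ^ (p + 1) =
      p * K / ((p + 1) * (1 - K * t ^ p)) := by
  have hpow : t ^ (p + 1) = t ^ p * t := by rw [Real.rpow_add ht, Real.rpow_one]
  have hu' : K * t ^ p - 1 ≠ 0 := by linarith
  have hu'' : 1 - K * t ^ p ≠ 0 := by linarith
  rw [majorant, majorantDeriv, hpow]
  field_simp [ht.ne', (Real.rpow_pos_of_pos ht p).ne', show p + 1 ≠ 0 by linarith]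
  ring

theorem strictMonoOn_majorant_div_majorantDeriv_sub_div_rpow (hK : 0 < K) (hp : 0 < p) :
    StrictMonoOn (fun t => (majorant K p t / majorantDeriv K p t - t) / t ^ (p + 1))
      (Ioo 0 ((1 / K) ^ (1 / p))) := by
  rintro x ⟨hx, hxν⟩ y ⟨hy, hyν⟩ hxy
  rw [← mul_rpow_lt_iff hK hp hx.le zero_le_one] at hxν
  rw [← mul_rpow_lt_iff hK hp hy.le zero_le_one] at hyν
  have hpow : K * x ^ p < K * y ^ p := by gcongr
  simp only [majorant_div_majorantDeriv_sub_div_rpow hp hx hxν,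
    majorant_div_majorantDeriv_sub_div_rpow hp hy hyν]
  gcongr

-- `A` and `B` stand for the coefficients `ω₁(1+ϑ)(1+λ)` and `ω₁[(1+ϑ)λ+ϑ] + ω₂`
-- of the condition defining `ρ`.
def majorantRadius (K p A B : ℝ) : ℝ := ((1 - B) / (A * (p / (p + 1)) + (1 - B)) / K) ^ (1 / p)

theorem majorantRadius_pos_lt {A B : ℝ} (hK : 0 < K) (hp : 0 < p) (hA : 0 < A) (hB : B < 1) :
    0 < majorantRadius K p A B ∧ majorantRadius K p A B < (1 / K) ^ (1 / p) := by
  have ha : 0 < A * (p / (p + 1)) := by positivity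
  have he : 0 < 1 - B := sub_pos.2 hB
  have hc1 : (1 - B) / (A * (p / (p + 1)) + (1 - B)) < 1 :=
    (div_lt_one (by linarith)).2 (by linarith)
  refine ⟨by unfold majorantRadius; positivity, ?_⟩
  unfold majorantRadius
  gcongr

theorem sSup_admissible_eq_majorantRadius {A B : ℝ} (hK : 0 < K) (hp : 0 < p) (hA : 0 < A)
    (hB : B < 1) :
    sSup {δ | δ ∈ Ioo 0 ((1 / K) ^ (1 / p)) ∧ ∀ t ∈ Ioo 0 δ,
      A * (majorant K p t / (t * majorantDeriv K p t) - 1) + B < 1} = majorantRadius K p A B := by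
  obtain ⟨h0, hlt⟩ := majorantRadius_pos_lt hK hp hA hB
  refine sSup_setOf_forall_Ioo h0 hlt fun t ⟨ht, htν⟩ => ?_
  rw [← mul_rpow_lt_iff hK hp ht.le zero_le_one] at htν
  have ha : 0 < A * (p / (p + 1)) := by positivity
  have he : 0 < 1 - B := sub_pos.2 hB
  rw [majorantRadius, ← mul_rpow_lt_iff hK hp ht.le (by positivity),
    majorant_div_mul_majorantDeriv_sub_one hp ht htν, ← mul_div_one_sub_lt_iff ha he htν, mul_assoc,
    lt_sub_iff_add_lt]

end

theorem stmt_14_general (K p : ℝ) (hK : 0 < K) (hp0 : 0 < p)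
    (f f' : ℝ → ℝ)
    (hf : ∀ t, f t = K * t ^ (p + 1) / (p + 1) - t)
    (hf' : ∀ t, f' t = K * t ^ p - 1)
    (ν : ℝ) (hν : ν = sSup {t : ℝ | 0 ≤ t ∧ f' t < 0})
    (ϑ ω₁ ω₂ lam : ℝ)
    (hϑ0 : 0 ≤ ϑ) (hω₂0 : 0 ≤ ω₂) (hω₁₂ : ω₂ < ω₁)
    (hlam0 : 0 ≤ lam) (hlam : lam < (1 - ω₂ - ω₁ * ϑ) / (ω₁ * (1 + ϑ)))
    (ρ : ℝ)
    (hρ : ρ = sSup {δ | δ ∈ Set.Ioo 0 ν ∧ ∀ t ∈ Set.Ioo 0 δ,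
      ω₁ * (1 + ϑ) * (1 + lam) * (f t / (t * f' t) - 1)
        + ω₁ * ((1 + ϑ) * lam + ϑ) + ω₂ < 1}) :
    (∀ t ∈ Set.Ici (0:ℝ), HasDerivWithinAt f (f' t) (Set.Ici 0) t) ∧
      f 0 = 0 ∧ f' 0 = -1 ∧ StrictMonoOn f' (Set.Ici 0) ∧
      StrictMonoOn (fun t => (f t / f' t - t) / t ^ (p + 1)) (Set.Ioo 0 ν) ∧
      ν = (1 / K) ^ (1 / p) ∧
      ρ = (((1 - ω₁ * ((1 + ϑ) * lam + ϑ) - ω₂) * (p + 1)) /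
          (K * (p - ω₁ * ((1 + ϑ) * lam + ϑ - p) - ω₂ * (p + 1) + 1))) ^ (1 / p) ∧
      ρ < ν := by
  obtain rfl : f = majorant K p := funext hf
  obtain rfl : f' = majorantDeriv K p := funext hf'
  rw [sSup_setOf_majorantDeriv_neg hK hp0] at hν
  subst hν
  have hω₁ : 0 < ω₁ := hω₂0.trans_lt hω₁₂
  have hA : 0 < ω₁ * (1 + ϑ) * (1 + lam) := by positivity
  have hB : ω₁ * ((1 + ϑ) * lam + ϑ) + ω₂ < 1 := by
    rw [lt_div_iff₀ (by positivity)] at hlam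
    linarith
  have hρ_eq :
      ρ = majorantRadius K p (ω₁ * (1 + ϑ) * (1 + lam)) (ω₁ * ((1 + ϑ) * lam + ϑ) + ω₂) := by
    rw [hρ, ← sSup_admissible_eq_majorantRadius hK hp0 hA hB]
    simp only [add_assoc]
  refine ⟨fun t _ => (hasDerivAt_majorant hp0 t).hasDerivWithinAt, majorant_zero hp0,
    majorantDeriv_zero hp0, strictMonoOn_majorantDeriv hK hp0,
    strictMonoOn_majorant_div_majorantDeriv_sub_div_rpow hK hp0, rfl, ?_,
    hρ_eq ▸ (majorantRadius_pos_lt hK hp0 hA hB).2⟩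
  rw [hρ_eq, majorantRadius]
  congr 1
  field_simp
  ring

theorem stmt_14 (K p : ℝ) (hK : 0 < K) (hp0 : 0 < p) (hp1 : p ≤ 1)
    (f f' : ℝ → ℝ)
    (hf : ∀ t, f t = K * t ^ (p + 1) / (p + 1) - t)
    (hf' : ∀ t, f' t = K * t ^ p - 1)
    (ν : ℝ) (hν : ν = sSup {t : ℝ | 0 ≤ t ∧ f' t < 0})
    (ϑ ω₁ ω₂ lam : ℝ)
    (hϑ0 : 0 ≤ ϑ) (hϑ1 : ϑ < 1) (hω₂0 : 0 ≤ ω₂) (hω₁₂ : ω₂ < ω₁)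
    (hωϑ : ω₁ * ϑ + ω₂ < 1)
    (hlam0 : 0 ≤ lam) (hlam : lam < (1 - ω₂ - ω₁ * ϑ) / (ω₁ * (1 + ϑ)))
    (ρ : ℝ)
    (hρ : ρ = sSup {δ | δ ∈ Set.Ioo 0 ν ∧ ∀ t ∈ Set.Ioo 0 δ,
      ω₁ * (1 + ϑ) * (1 + lam) * (f t / (t * f' t) - 1)
        + ω₁ * ((1 + ϑ) * lam + ϑ) + ω₂ < 1}) :
    (∀ t ∈ Set.Ici (0:ℝ), HasDerivWithinAt f (f' t) (Set.Ici 0) t) ∧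
      f 0 = 0 ∧ f' 0 = -1 ∧ StrictMonoOn f' (Set.Ici 0) ∧
      StrictMonoOn (fun t => (f t / f' t - t) / t ^ (p + 1)) (Set.Ioo 0 ν) ∧
      ν = (1 / K) ^ (1 / p) ∧
      ρ = (((1 - ω₁ * ((1 + ϑ) * lam + ϑ) - ω₂) * (p + 1)) /
          (K * (p - ω₁ * ((1 + ϑ) * lam + ϑ - p) - ω₂ * (p + 1) + 1))) ^ (1 / p) ∧
      ρ < ν :=
  stmt_14_general K p hK hp0 f f' hf hf' ν hν ϑ ω₁ ω₂ lam hϑ0 hω₂0 hω₁₂ hlam0 hlam ρ hρ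
end

section
/- Let γ > 0 and define f : [0, 1/γ) → ℝ by f(t) = t/(1 − γt) − 2t. Then f(0) = 0, f'(0) = −1, f' is strictly increasing and convex (so t ↦ [f(t)/f'(t) − t]/t² is strictly increasing on (0, ν)), and, with constants 0 ≤ ϑ < 1, 0 ≤ ω₂ < ω₁, ω₁ϑ + ω₂ < 1, 0 ≤ λ < (1 − ω₂ − ω₁ϑ)/(ω₁(1+ϑ)), a := ω₁(1+ϑ)(1−3λ) + 4(1 − ω₁ϑ − ω₂), b := 1 − ω₁[(1+ϑ)λ + ϑ] − ω₂, the scalars ν := sup{t ∈ [0, 1/γ) : f'(t) < 0} and ρ := sup{δ ∈ (0, ν) : ω₁(1+ϑ)(1+λ)(f(t)/(t f'(t)) − 1) + ω₁[(1+ϑ)λ + ϑ] + ω₂ < 1 for all t ∈ (0, δ)} satisfy ν = (√2 − 1)/(√2 γ), ρ = (a − √(a² − 8b²))/(4γb), and ρ < ν < 1/γ. -/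
/-!
Put `u = 1 - γ t`. Then `f' t = 1 / u² - 2` is negative exactly while `u > 1 / √2`, which
gives `ν`. On `(0, ν)` one computes `f t / (t f' t) - 1 = γ t / (2 u² - 1)`, so after clearing
the positive denominator the inequality defining `ρ` says that the quadratic `2 b s² - a s + b`
is positive at `s = γ t`. Since `a = ω₁ (1 + ϑ) (1 + λ) + 4 b`, this quadratic takes the negative
value `-ω₁ (1 + ϑ) (1 + λ) γ ν` at `s = γ ν`; hence `γ ρ` is its smaller root, and `ρ < ν`.
-/

open Set Real

lemma csSup_setOf_forall_Ioo_eq {α : Type*} [ConditionallyCompleteLinearOrder α]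
    {p : α → Prop} {a r ν : α} (har : a < r) (hrν : r < ν) (hp : ∀ t ∈ Ioo a r, p t) (hr : ¬ p r) :
    sSup {δ | δ ∈ Ioo a ν ∧ ∀ t ∈ Ioo a δ, p t} = r := by
  suffices {δ | δ ∈ Ioo a ν ∧ ∀ t ∈ Ioo a δ, p t} = Ioc a r by rw [this, csSup_Ioc har]
  ext δ
  exact ⟨fun ⟨⟨haδ, _⟩, hδ⟩ => ⟨haδ, not_lt.mp fun hrδ => hr (hδ r ⟨har, hrδ⟩)⟩,
    fun ⟨haδ, hδr⟩ => ⟨⟨haδ, hδr.trans_lt hrν⟩, fun t ht => hp t ⟨ht.1, ht.2.trans_le hδr⟩⟩⟩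

section Quadratic

variable {a b c x : ℝ}

lemma quadratic_smaller_root_eq_zero (ha : 0 < a) (hD : 0 ≤ b ^ 2 - 4 * a * c) :
    a * ((b - √(b ^ 2 - 4 * a * c)) / (2 * a)) ^ 2 - b * ((b - √(b ^ 2 - 4 * a * c)) / (2 * a))
      + c = 0 := by
  have he := sq_sqrt hD
  generalize √(b ^ 2 - 4 * a * c) = e at he ⊢
  field_simp
  linear_combination he

lemma four_mul_quadratic_eq_mul (hD : 0 ≤ b ^ 2 - 4 * a * c) :
    4 * a * (a * x ^ 2 - b * x + c) =
      (b - √(b ^ 2 - 4 * a * c) - 2 * a * x) * (b + √(b ^ 2 - 4 * a * c) - 2 * a * x) := by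
  linear_combination sq_sqrt hD

lemma quadratic_nonneg_of_le_smaller_root (ha : 0 < a) (hD : 0 ≤ b ^ 2 - 4 * a * c)
    (hx : x ≤ (b - √(b ^ 2 - 4 * a * c)) / (2 * a)) : 0 ≤ a * x ^ 2 - b * x + c := by
  rw [le_div_iff₀ (by positivity), mul_comm] at hx
  rw [← mul_nonneg_iff_of_pos_left (by positivity : (0 : ℝ) < 4 * a),
    four_mul_quadratic_eq_mul hD]
  exact mul_nonneg (by linarith) (by linarith [sqrt_nonneg (b ^ 2 - 4 * a * c)])

lemma quadratic_pos_of_lt_smaller_root (ha : 0 < a) (hD : 0 ≤ b ^ 2 - 4 * a * c)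
    (hx : x < (b - √(b ^ 2 - 4 * a * c)) / (2 * a)) : 0 < a * x ^ 2 - b * x + c := by
  rw [lt_div_iff₀ (by positivity), mul_comm] at hx
  rw [← mul_pos_iff_of_pos_left (by positivity : (0 : ℝ) < 4 * a),
    four_mul_quadratic_eq_mul hD]
  exact mul_pos (by linarith) (by linarith [sqrt_nonneg (b ^ 2 - 4 * a * c)])

end Quadratic

/-- The majorant function of Smale's point estimate theory. -/
noncomputable def smaleMajorant (γ t : ℝ) : ℝ := t / (1 - γ * t) - 2 * t

noncomputable def smaleMajorantDeriv (γ t : ℝ) : ℝ := 1 / (1 - γ * t) ^ 2 - 2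

noncomputable def smaleCriticalPoint (γ : ℝ) : ℝ := (√2 - 1) / (√2 * γ)

section SmaleMajorant

variable {γ t : ℝ}

lemma one_sub_mul_pos (hγ : 0 < γ) (ht : t < 1 / γ) : 0 < 1 - γ * t := by
  rw [lt_div_iff₀ hγ] at ht
  linarith

lemma hasDerivAt_smaleMajorant (ht : 1 - γ * t ≠ 0) :
    HasDerivAt (smaleMajorant γ) (smaleMajorantDeriv γ t) t := by
  have hu : HasDerivAt (fun t => 1 - γ * t) (-γ) t := by
    simpa using ((hasDerivAt_id t).const_mul γ).const_sub 1
  refine (((hasDerivAt_id t).div hu ht).sub ((hasDerivAt_id t).const_mul 2)).congr_deriv ?_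
  simp only [smaleMajorantDeriv, id, one_mul, mul_one]
  field_simp
  ring

lemma strictMonoOn_smaleMajorantDeriv (hγ : 0 < γ) :
    StrictMonoOn (smaleMajorantDeriv γ) (Iio (1 / γ)) := by
  intro x _ y hy hxy
  have hy0 := one_sub_mul_pos hγ hy
  have hyx : 1 - γ * y < 1 - γ * x := by nlinarith
  simp only [smaleMajorantDeriv, sub_lt_sub_iff_right]
  exact one_div_lt_one_div_of_lt (by positivity) (pow_lt_pow_left₀ hyx hy0.le two_ne_zero)

lemma convexOn_smaleMajorantDeriv (hγ : 0 < γ) :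
    ConvexOn ℝ (Iio (1 / γ)) (smaleMajorantDeriv γ) := by
  let g : ℝ →ᵃ[ℝ] ℝ := AffineMap.const ℝ ℝ 1 - γ • AffineMap.id ℝ ℝ
  have hg : g ⁻¹' Ioi 0 = Iio (1 / γ) := by
    ext t
    show 0 < 1 - γ * t ↔ t < 1 / γ
    rw [sub_pos, lt_div_iff₀ hγ, mul_comm]
  refine hg ▸ (((convexOn_zpow (-2)).comp_affineMap g).add_const (-2)).congr fun t _ => ?_
  simp [smaleMajorantDeriv, g, zpow_neg, sub_eq_add_neg]

lemma smaleCriticalPoint_pos (hγ : 0 < γ) : 0 < smaleCriticalPoint γ := by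
  have := one_lt_sqrt_two
  unfold smaleCriticalPoint
  exact div_pos (by linarith) (by positivity)

lemma smaleCriticalPoint_lt_one_div (hγ : 0 < γ) : smaleCriticalPoint γ < 1 / γ := by
  unfold smaleCriticalPoint
  rw [div_lt_div_iff₀ (by positivity) hγ]
  nlinarith [sqrt_nonneg 2]

lemma two_mul_sq_one_sub_mul_smaleCriticalPoint_sub_one (hγ : 0 < γ) :
    2 * (1 - γ * smaleCriticalPoint γ) ^ 2 - 1 = 0 := by
  have h2 : √2 ^ 2 = 2 := sq_sqrt zero_le_two
  unfold smaleCriticalPoint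
  field_simp
  linear_combination -h2

lemma two_mul_sq_one_sub_mul_sub_one_pos_iff (hγ : 0 < γ) (ht : t < 1 / γ) :
    0 < 2 * (1 - γ * t) ^ 2 - 1 ↔ t < smaleCriticalPoint γ := by
  have h2 : √2 ^ 2 = 2 := sq_sqrt zero_le_two
  have hfactor :
      2 * (1 - γ * t) ^ 2 - 1 = (√2 * (1 - γ * t) - 1) * (√2 * (1 - γ * t) + 1) := by
    linear_combination -(1 - γ * t) ^ 2 * h2
  rw [hfactor, mul_pos_iff_of_pos_right (by have := one_sub_mul_pos hγ ht; positivity),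
    smaleCriticalPoint, lt_div_iff₀ (by positivity)]
  constructor <;> intro h <;> linarith

lemma smaleMajorantDeriv_neg_iff (hγ : 0 < γ) (ht : t < 1 / γ) :
    smaleMajorantDeriv γ t < 0 ↔ t < smaleCriticalPoint γ := by
  rw [smaleMajorantDeriv, sub_neg, div_lt_iff₀ (pow_pos (one_sub_mul_pos hγ ht) 2), ← sub_pos,
    two_mul_sq_one_sub_mul_sub_one_pos_iff hγ ht]

lemma csSup_setOf_smaleMajorantDeriv_neg (hγ : 0 < γ) :
    sSup {t | t ∈ Ico 0 (1 / γ) ∧ smaleMajorantDeriv γ t < 0} = smaleCriticalPoint γ := by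
  have hν := smaleCriticalPoint_lt_one_div hγ
  suffices
      {t | t ∈ Ico 0 (1 / γ) ∧ smaleMajorantDeriv γ t < 0} = Ico 0 (smaleCriticalPoint γ) by
    rw [this, csSup_Ico (smaleCriticalPoint_pos hγ)]
  ext t
  exact ⟨fun ⟨⟨h0, h1⟩, hneg⟩ => ⟨h0, (smaleMajorantDeriv_neg_iff hγ h1).mp hneg⟩,
    fun ⟨h0, ht⟩ => ⟨⟨h0, ht.trans hν⟩, (smaleMajorantDeriv_neg_iff hγ (ht.trans hν)).mpr ht⟩⟩

lemma smaleMajorant_div_mul_deriv_sub_one (hγ : 0 < γ)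
    (ht : t ∈ Ioo 0 (smaleCriticalPoint γ)) :
    smaleMajorant γ t / (t * smaleMajorantDeriv γ t) - 1 = γ * t / (2 * (1 - γ * t) ^ 2 - 1) := by
  have ht1 := ht.2.trans (smaleCriticalPoint_lt_one_div hγ)
  have key : ∀ u : ℝ, u ≠ 0 → 2 * u ^ 2 - 1 ≠ 0 →
      (t / u - 2 * t) / (t * (1 / u ^ 2 - 2)) - 1 = (1 - u) / (2 * u ^ 2 - 1) := by
    intro u hu hd
    have hX : t * (1 / u ^ 2 - 2) ≠ 0 := by
      refine mul_ne_zero ht.1.ne' fun h => hd ?_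
      field_simp at h
      linarith
    rw [div_sub_one hX, div_eq_div_iff hX hd]
    field_simp
    ring
  rw [smaleMajorant, smaleMajorantDeriv, key _ (one_sub_mul_pos hγ ht1).ne'
    ((two_mul_sq_one_sub_mul_sub_one_pos_iff hγ ht1).mpr ht.2).ne', sub_sub_cancel]

lemma smaleMajorant_div_deriv_sub_div_sq (hγ : 0 < γ)
    (ht : t ∈ Ioo 0 (smaleCriticalPoint γ)) :
    (smaleMajorant γ t / smaleMajorantDeriv γ t - t) / t ^ 2 = γ / (2 * (1 - γ * t) ^ 2 - 1) := by
  have hF' :=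
    ((smaleMajorantDeriv_neg_iff hγ (ht.2.trans (smaleCriticalPoint_lt_one_div hγ))).mpr ht.2).ne
  have ht0 := ht.1.ne'
  have : (smaleMajorant γ t / smaleMajorantDeriv γ t - t) / t ^ 2
      = (smaleMajorant γ t / (t * smaleMajorantDeriv γ t) - 1) / t := by
    field_simp
  rw [this, smaleMajorant_div_mul_deriv_sub_one hγ ht, mul_comm γ t, mul_div_assoc,
    mul_div_cancel_left₀ _ ht0]

lemma strictMonoOn_smaleMajorant_div_deriv_sub_div_sq (hγ : 0 < γ) :
    StrictMonoOn (fun t => (smaleMajorant γ t / smaleMajorantDeriv γ t - t) / t ^ 2)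
      (Ioo 0 (smaleCriticalPoint γ)) := by
  refine StrictMonoOn.congr ?_ fun t ht => (smaleMajorant_div_deriv_sub_div_sq hγ ht).symm
  intro x _ y hy hxy
  have hy1 := hy.2.trans (smaleCriticalPoint_lt_one_div hγ)
  have hy0 := one_sub_mul_pos hγ hy1
  have hyx : 1 - γ * y < 1 - γ * x := by nlinarith
  refine div_lt_div_of_pos_left hγ ((two_mul_sq_one_sub_mul_sub_one_pos_iff hγ hy1).mpr hy.2) ?_
  have := pow_lt_pow_left₀ hyx hy0.le two_ne_zero
  linarith

lemma mul_smaleMajorant_div_sub_one_add_lt_one_iff (hγ : 0 < γ)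
    (ht : t ∈ Ioo 0 (smaleCriticalPoint γ)) {A c : ℝ} :
    A * (smaleMajorant γ t / (t * smaleMajorantDeriv γ t) - 1) + c < 1 ↔
      0 < 2 * (1 - c) * (γ * t) ^ 2 - (A + 4 * (1 - c)) * (γ * t) + (1 - c) := by
  have hd := (two_mul_sq_one_sub_mul_sub_one_pos_iff hγ
    (ht.2.trans (smaleCriticalPoint_lt_one_div hγ))).mpr ht.2
  rw [smaleMajorant_div_mul_deriv_sub_one hγ ht, mul_div_assoc', ← lt_sub_iff_add_lt,
    div_lt_iff₀ hd]
  constructor <;> intro h <;> linarith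

end SmaleMajorant

noncomputable def smaleRadius (γ a b : ℝ) : ℝ := (a - √(a ^ 2 - 8 * b ^ 2)) / (4 * γ * b)

section SmaleRadius

variable {γ A a b : ℝ}

lemma mul_smaleRadius (hγ : 0 < γ) (hb : 0 < b) :
    γ * smaleRadius γ a b = (a - √(a ^ 2 - 4 * (2 * b) * b)) / (2 * (2 * b)) := by
  rw [smaleRadius, show a ^ 2 - 8 * b ^ 2 = a ^ 2 - 4 * (2 * b) * b by ring]
  field_simp
  ring

lemma smaleRadius_pos (hγ : 0 < γ) (hA : 0 < A) (hb : 0 < b) (ha : a = A + 4 * b) :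
    0 < smaleRadius γ a b := by
  have hlt : √(a ^ 2 - 8 * b ^ 2) < a := (sqrt_lt' (by linarith)).mpr (by nlinarith)
  exact div_pos (by linarith) (by positivity)

lemma smaleRadius_lt_smaleCriticalPoint (hγ : 0 < γ) (hA : 0 < A) (hb : 0 < b)
    (ha : a = A + 4 * b) : smaleRadius γ a b < smaleCriticalPoint γ := by
  have hν := smaleCriticalPoint_pos hγ
  have hq : 2 * b * (γ * smaleCriticalPoint γ) ^ 2 - a * (γ * smaleCriticalPoint γ) + b
      = -(A * γ * smaleCriticalPoint γ) := by
    linear_combination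
      b * two_mul_sq_one_sub_mul_smaleCriticalPoint_sub_one hγ - γ * smaleCriticalPoint γ * ha
  by_contra! h
  have := quadratic_nonneg_of_le_smaller_root (by positivity) (by nlinarith)
    ((mul_smaleRadius hγ hb).symm.trans_ge (mul_le_mul_of_nonneg_left h hγ.le))
  nlinarith [mul_pos (mul_pos hA hγ) hν]

lemma csSup_setOf_forall_mul_smaleMajorant_add_lt_one (hγ : 0 < γ) (hA : 0 < A) (hb : 0 < b)
    (ha : a = A + 4 * b) {c : ℝ} (hc : b = 1 - c) :
    sSup {δ | δ ∈ Ioo 0 (smaleCriticalPoint γ) ∧ ∀ t ∈ Ioo 0 δ,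
      A * (smaleMajorant γ t / (t * smaleMajorantDeriv γ t) - 1) + c < 1} = smaleRadius γ a b := by
  have hrν := smaleRadius_lt_smaleCriticalPoint hγ hA hb ha
  have hD : 0 ≤ a ^ 2 - 4 * (2 * b) * b := by nlinarith
  have hcond : ∀ t ∈ Ioo 0 (smaleCriticalPoint γ),
      A * (smaleMajorant γ t / (t * smaleMajorantDeriv γ t) - 1) + c < 1 ↔
        0 < 2 * b * (γ * t) ^ 2 - a * (γ * t) + b := by
    intro t ht
    rw [mul_smaleMajorant_div_sub_one_add_lt_one_iff hγ ht, ← hc, ← ha]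
  refine csSup_setOf_forall_Ioo_eq (smaleRadius_pos hγ hA hb ha) hrν (fun t ht => ?_) ?_
  · rw [hcond t ⟨ht.1, ht.2.trans hrν⟩]
    refine quadratic_pos_of_lt_smaller_root (by positivity) hD ?_
    exact (mul_smaleRadius hγ hb) ▸ mul_lt_mul_of_pos_left ht.2 hγ
  · rw [hcond _ ⟨smaleRadius_pos hγ hA hb ha, hrν⟩, mul_smaleRadius hγ hb,
      quadratic_smaller_root_eq_zero (by positivity) hD]
    exact lt_irrefl 0

end SmaleRadius

theorem stmt_15_general (γ : ℝ) (hγ : 0 < γ)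
    (f f' : ℝ → ℝ)
    (hf : ∀ t, f t = t / (1 - γ * t) - 2 * t)
    (hf' : ∀ t, f' t = 1 / (1 - γ * t) ^ 2 - 2)
    (ν : ℝ) (hν : ν = sSup {t | t ∈ Set.Ico 0 (1 / γ) ∧ f' t < 0})
    (ϑ ω₁ ω₂ lam : ℝ)
    (hϑ0 : 0 ≤ ϑ) (hω₂0 : 0 ≤ ω₂) (hω₁₂ : ω₂ < ω₁)
    (hlam0 : 0 ≤ lam) (hlam : lam < (1 - ω₂ - ω₁ * ϑ) / (ω₁ * (1 + ϑ)))
    (a b : ℝ)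
    (ha : a = ω₁ * (1 + ϑ) * (1 - 3 * lam) + 4 * (1 - ω₁ * ϑ - ω₂))
    (hb : b = 1 - ω₁ * ((1 + ϑ) * lam + ϑ) - ω₂)
    (ρ : ℝ)
    (hρ : ρ = sSup {δ | δ ∈ Set.Ioo 0 ν ∧ ∀ t ∈ Set.Ioo 0 δ,
      ω₁ * (1 + ϑ) * (1 + lam) * (f t / (t * f' t) - 1)
        + ω₁ * ((1 + ϑ) * lam + ϑ) + ω₂ < 1}) :
    f 0 = 0 ∧ f' 0 = -1 ∧
      (∀ t ∈ Set.Ico 0 (1 / γ), HasDerivWithinAt f (f' t) (Set.Ico 0 (1 / γ)) t) ∧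
      StrictMonoOn f' (Set.Ico 0 (1 / γ)) ∧
      ConvexOn ℝ (Set.Ico 0 (1 / γ)) f' ∧
      StrictMonoOn (fun t => (f t / f' t - t) / t ^ 2) (Set.Ioo 0 ν) ∧
      ν = (Real.sqrt 2 - 1) / (Real.sqrt 2 * γ) ∧
      ρ = (a - Real.sqrt (a ^ 2 - 8 * b ^ 2)) / (4 * γ * b) ∧
      ρ < ν ∧ ν < 1 / γ := by
  obtain rfl : f = smaleMajorant γ := funext hf
  obtain rfl : f' = smaleMajorantDeriv γ := funext hf'
  obtain rfl : ν = smaleCriticalPoint γ := hν.trans (csSup_setOf_smaleMajorantDeriv_neg hγ)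
  have hω₁ : 0 < ω₁ := hω₂0.trans_lt hω₁₂
  have hA : 0 < ω₁ * (1 + ϑ) * (1 + lam) := by positivity
  have hb0 : 0 < b := by
    rw [lt_div_iff₀ (by positivity)] at hlam
    linarith
  have ha' : a = ω₁ * (1 + ϑ) * (1 + lam) + 4 * b := by rw [ha, hb]; ring
  obtain rfl : ρ = smaleRadius γ a b := by
    rw [hρ]
    simp only [add_assoc]
    exact csSup_setOf_forall_mul_smaleMajorant_add_lt_one hγ hA hb0 ha' (by rw [hb]; ring)
  exact ⟨by simp [smaleMajorant], by norm_num [smaleMajorantDeriv],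
    fun t ht => (hasDerivAt_smaleMajorant (one_sub_mul_pos hγ ht.2).ne').hasDerivWithinAt,
    (strictMonoOn_smaleMajorantDeriv hγ).mono Ico_subset_Iio_self,
    (convexOn_smaleMajorantDeriv hγ).subset Ico_subset_Iio_self (convex_Ico _ _),
    strictMonoOn_smaleMajorant_div_deriv_sub_div_sq hγ, rfl, rfl,
    smaleRadius_lt_smaleCriticalPoint hγ hA hb0 ha', smaleCriticalPoint_lt_one_div hγ⟩

theorem stmt_15 (γ : ℝ) (hγ : 0 < γ)
    (f f' : ℝ → ℝ)
    (hf : ∀ t, f t = t / (1 - γ * t) - 2 * t)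
    (hf' : ∀ t, f' t = 1 / (1 - γ * t) ^ 2 - 2)
    (ν : ℝ) (hν : ν = sSup {t | t ∈ Set.Ico 0 (1 / γ) ∧ f' t < 0})
    (ϑ ω₁ ω₂ lam : ℝ)
    (hϑ0 : 0 ≤ ϑ) (hϑ1 : ϑ < 1) (hω₂0 : 0 ≤ ω₂) (hω₁₂ : ω₂ < ω₁)
    (hωϑ : ω₁ * ϑ + ω₂ < 1)
    (hlam0 : 0 ≤ lam) (hlam : lam < (1 - ω₂ - ω₁ * ϑ) / (ω₁ * (1 + ϑ)))
    (a b : ℝ)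
    (ha : a = ω₁ * (1 + ϑ) * (1 - 3 * lam) + 4 * (1 - ω₁ * ϑ - ω₂))
    (hb : b = 1 - ω₁ * ((1 + ϑ) * lam + ϑ) - ω₂)
    (ρ : ℝ)
    (hρ : ρ = sSup {δ | δ ∈ Set.Ioo 0 ν ∧ ∀ t ∈ Set.Ioo 0 δ,
      ω₁ * (1 + ϑ) * (1 + lam) * (f t / (t * f' t) - 1)
        + ω₁ * ((1 + ϑ) * lam + ϑ) + ω₂ < 1}) :
    f 0 = 0 ∧ f' 0 = -1 ∧
      (∀ t ∈ Set.Ico 0 (1 / γ), HasDerivWithinAt f (f' t) (Set.Ico 0 (1 / γ)) t) ∧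
      StrictMonoOn f' (Set.Ico 0 (1 / γ)) ∧
      ConvexOn ℝ (Set.Ico 0 (1 / γ)) f' ∧
      StrictMonoOn (fun t => (f t / f' t - t) / t ^ 2) (Set.Ioo 0 ν) ∧
      ν = (Real.sqrt 2 - 1) / (Real.sqrt 2 * γ) ∧
      ρ = (a - Real.sqrt (a ^ 2 - 8 * b ^ 2)) / (4 * γ * b) ∧
      ρ < ν ∧ ν < 1 / γ :=
  stmt_15_general γ hγ f f' hf hf' ν hν ϑ ω₁ ω₂ lam hϑ0 hω₂0 hω₁₂ hlam0 hlam a b ha hb ρ hρ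
end
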